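/- Lᵖ error of the midpoint-interpolated slope function: Let p ∈ [1,∞), let N ≥ 1 be an integer, h = 1/N, and let v = (v_j) be a discrete curve with slopes d_j and second differences D_j. Let g : (0,1) → ℝ be the step function equal to d_j on (x_{j−1}, x_j), and let I_h g be the 1-periodic continuous function that is affine on each interval (x_{j−1/2}, x_{j+1/2}) (where x_{j−1/2} = (j − 1/2)·h) and satisfies I_h g(x_{j−1/2}) = d_j for all j. Then (∫₀¹ |g(x) − I_h g(x)|^p dx)^{1/p} ≤ (1 + p)^{−1/p} · h · (Σ_{j=1}^N |D_j|^p · h)^{1/p}. -/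

import Mathlib

open Filter MeasureTheory

noncomputable section

/-- mesh point `x_j = j·h` with `h = 1/N`. -/
def xj (N : ℕ) (j : ℤ) : ℝ := j * ((1 : ℝ) / N)

/-- first difference quotient `d_j = (v_j − v_{j−1})/h`. -/
def dq (N : ℕ) (v : ℤ → ℝ) (j : ℤ) : ℝ := (v j - v (j - 1)) / ((1 : ℝ) / N)

/-- second difference quotient `D_j = (v_{j+1} − 2v_j + v_{j−1})/h²`. -/
def Dq (N : ℕ) (v : ℤ → ℝ) (j : ℤ) : ℝ :=
  (v (j + 1) - 2 * v j + v (j - 1)) / ((1 : ℝ) / N) ^ 2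

/-- half segment length `l_j = (h/2)·√(1 + d_j²)`. -/
def lq (N : ℕ) (v : ℤ → ℝ) (j : ℤ) : ℝ :=
  ((1 : ℝ) / N) / 2 * Real.sqrt (1 + dq N v j ^ 2)

/-- angle `θ_j` between consecutive segments. -/
def θq (N : ℕ) (v : ℤ → ℝ) (j : ℤ) : ℝ :=
  Real.arccos ((1 + dq N v j * dq N v (j + 1)) /
    (Real.sqrt (1 + dq N v j ^ 2) * Real.sqrt (1 + dq N v (j + 1) ^ 2)))

/-- discrete bending energy `B_h`. -/
def Bh (C : ℝ) (N : ℕ) (v : ℤ → ℝ) : ℝ :=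
  C / 2 * ∑ j ∈ Finset.Icc (1 : ℤ) N, θq N v j ^ 2 *
    ((lq N v j ^ 3 + lq N v (j + 1) ^ 3) /
      (lq N v j * lq N v (j + 1) * (lq N v j + lq N v (j + 1)) ^ 2))

/-- discrete tension `T_h`. -/
def Th (σ : ℝ) (N : ℕ) (v : ℤ → ℝ) : ℝ :=
  σ * ∑ j ∈ Finset.Icc (1 : ℤ) N, 2 * lq N v j

/-- a regularizer `ζ`. -/
def IsRegularizer (ζ : ℝ → ℝ) : Prop :=
  ContDiff ℝ 1 ζ ∧ (∀ t, 0 ≤ ζ t ∧ ζ t ≤ 1) ∧ (∀ t, ζ (-t) = ζ t) ∧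
    (∀ t, 1 < t → ζ t = 0) ∧ AntitoneOn ζ (Set.Icc 0 1) ∧ ζ 0 = 1

/-- discrete adhesion energy `A_{h,δ}` (with `ζ_δ(t) = ζ(t/δ)`). -/
def Ah (γ : ℝ) (ζ : ℝ → ℝ) (δ : ℝ) (ψ : ℝ → ℝ) (N : ℕ) (v : ℤ → ℝ) : ℝ :=
  γ * ∑ j ∈ Finset.Icc (1 : ℤ) N,
    ζ ((v (j - 1) - ψ (xj N (j - 1))) / δ) * ζ ((v j - ψ (xj N j)) / δ) * (2 * lq N v j)

/-- discrete penalty `P_{h,ρ}`. -/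
def Ph (ρ : ℝ) (ψ : ℝ → ℝ) (N : ℕ) (v : ℤ → ℝ) : ℝ :=
  1 / ρ * ∑ j ∈ Finset.Icc (1 : ℤ) N, max (ψ (xj N j) - v j) 0 ^ 2 * ((1 : ℝ) / N)

/-- total discrete energy `E_{h,δ,ρ}`. -/
def Eh (C σ γ : ℝ) (ζ ψ : ℝ → ℝ) (N : ℕ) (δ ρ : ℝ) (v : ℤ → ℝ) : ℝ :=
  Bh C N v + Th σ N v - Ah γ ζ δ ψ N v + Ph ρ ψ N v

/-- piecewise-affine interpolant of a discrete curve: on `[x_{j−1}, x_j]` it is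
`v_{j−1} + d_j·(x − x_{j−1})`. -/
def interp (N : ℕ) (v : ℤ → ℝ) (x : ℝ) : ℝ :=
  v (⌈x * N⌉ - 1) + dq N v ⌈x * N⌉ * (x - xj N (⌈x * N⌉ - 1))

/-- slope step function of a discrete curve: equal to `d_j` on `(x_{j−1}, x_j)`. -/
def slopeFn (N : ℕ) (v : ℤ → ℝ) (x : ℝ) : ℝ := dq N v ⌈x * N⌉

/-- midpoint-interpolated slope function `I_h g`: the 1-periodic continuous function
that is affine on each interval `(x_{j−1/2}, x_{j+1/2})` (with
`x_{j−1/2} = (j−1/2)·h`) and satisfies `I_h g (x_{j−1/2}) = d_j`. -/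
def midInterp (N : ℕ) (v : ℤ → ℝ) (x : ℝ) : ℝ :=
  dq N v ⌊x * N + 1 / 2⌋ +
    (x - ((⌊x * N + 1 / 2⌋ : ℝ) - 1 / 2) * ((1 : ℝ) / N)) *
      ((dq N v (⌊x * N + 1 / 2⌋ + 1) - dq N v ⌊x * N + 1 / 2⌋) / ((1 : ℝ) / N))

/-!
On a cell `(x_j, x_{j+1})` the slope function is the constant `d_{j+1}`, while `I_h g` takes the
value `d_{j+1}` at the midpoint `x_{j+1/2}` and is affine with slope `D_j` on the left half of the
cell and `D_{j+1}` on the right half. So `|g - I_h g|` is `|x - x_{j+1/2}|` times `|D_j|`,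
resp. `|D_{j+1}|`, and the cell contributes `(h/2)^(p+1)/(p+1) · (|D_j|^p + |D_{j+1}|^p)`. Summing
over the cells and using periodicity gives
`‖g - I_h g‖_p^p = 2^(-p) · h^p/(p+1) · ∑ |D_j|^p h`,
the claimed bound up to the factor `2^(-p) ≤ 1`.
-/

open Set

section IntervalIntegrals

variable {p : ℝ}

theorem integral_zero_abs_rpow (hp : -1 < p) {s : ℝ} (hs : 0 ≤ s) :
    ∫ x in (0 : ℝ)..s, |x| ^ p = s ^ (p + 1) / (p + 1) := by
  rw [intervalIntegral.integral_congr (g := fun x => x ^ p) fun x hx => by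
      rw [uIcc_of_le hs] at hx; simp only [abs_of_nonneg hx.1],
    integral_rpow (Or.inl hp), Real.zero_rpow (by linarith), sub_zero]

theorem integral_abs_sub_left_rpow (hp : -1 < p) {a b : ℝ} (hab : a ≤ b) :
    ∫ x in a..b, |x - a| ^ p = (b - a) ^ (p + 1) / (p + 1) := by
  rw [intervalIntegral.integral_comp_sub_right (fun x => |x| ^ p), sub_self,
    integral_zero_abs_rpow hp (sub_nonneg.2 hab)]

theorem integral_abs_sub_right_rpow (hp : -1 < p) {a b : ℝ} (hab : a ≤ b) :
    ∫ x in a..b, |b - x| ^ p = (b - a) ^ (p + 1) / (p + 1) := by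
  rw [intervalIntegral.integral_comp_sub_left (fun x => |x| ^ p), sub_self,
    integral_zero_abs_rpow hp (sub_nonneg.2 hab)]

theorem intervalIntegrable_and_integral_of_eqOn_abs_sub_rpow_mul (hp : 0 ≤ p)
    {f : ℝ → ℝ} {a m b A B : ℝ} (ham : a ≤ m) (hmb : m ≤ b)
    (hleft : EqOn f (fun x => |m - x| ^ p * A) (Ioo a m))
    (hright : EqOn f (fun x => |x - m| ^ p * B) (Ioo m b)) :
    IntervalIntegrable f volume a b ∧
      ∫ x in a..b, f x = ((m - a) ^ (p + 1) * A + (b - m) ^ (p + 1) * B) / (p + 1) := by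
  have hl : IntervalIntegrable f volume a m :=
    (intervalIntegrable_congr_uIoo (uIoo_of_le ham ▸ hleft)).2 <|
      (((continuous_const.sub continuous_id).abs.rpow_const fun _ => Or.inr hp).mul
        continuous_const).intervalIntegrable _ _
  have hr : IntervalIntegrable f volume m b :=
    (intervalIntegrable_congr_uIoo (uIoo_of_le hmb ▸ hright)).2 <|
      (((continuous_id.sub continuous_const).abs.rpow_const fun _ => Or.inr hp).mul
        continuous_const).intervalIntegrable _ _
  refine ⟨hl.trans hr, ?_⟩
  rw [← intervalIntegral.integral_add_adjacent_intervals hl hr,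
    intervalIntegral.integral_congr_Ioo_of_le ham hleft,
    intervalIntegral.integral_congr_Ioo_of_le hmb hright,
    intervalIntegral.integral_mul_const, intervalIntegral.integral_mul_const,
    integral_abs_sub_right_rpow (by linarith) ham, integral_abs_sub_left_rpow (by linarith) hmb]
  ring

end IntervalIntegrals

theorem Finset.sum_range_natCast_add_one_eq_sum_Icc {M : Type*} [AddCommMonoid M] (f : ℤ → M)
    (n : ℕ) :
    ∑ k ∈ Finset.range n, f (k + 1) = ∑ j ∈ Finset.Icc (1 : ℤ) n, f j := by
  rw [Int.Icc_eq_finset_map, Finset.sum_map]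
  simp [add_comm]

theorem Function.Periodic.sum_range_natCast_add_one {M : Type*} [AddCommMonoid M] {f : ℤ → M}
    {n : ℕ} (hf : Function.Periodic f n) :
    ∑ k ∈ Finset.range n, f (k + 1) = ∑ k ∈ Finset.range n, f k := by
  cases n with
  | zero => simp
  | succ n =>
    rw [Finset.sum_range_succ, Finset.sum_range_succ', ← Nat.cast_succ, hf.eq]
    simp

theorem Set.mem_Ioo_mul_one_div_iff {c s t x : ℝ} (hc : 0 < c) :
    x ∈ Ioo (s * (1 / c)) (t * (1 / c)) ↔ x * c ∈ Ioo s t := by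
  simp only [mem_Ioo, mul_one_div, div_lt_iff₀ hc, lt_div_iff₀ hc]

theorem Dq_periodic {N : ℕ} {v : ℤ → ℝ} (hv : Function.Periodic v N) :
    Function.Periodic (Dq N v) N := fun j => by
  simp only [Dq, add_right_comm j (N : ℤ), add_sub_right_comm j (N : ℤ), hv _]

section Cell

variable {N : ℕ} {x : ℝ} {j : ℤ}

theorem slopeFn_sub_midInterp_of_lt_mid (hN : N ≠ 0) (v : ℤ → ℝ)
    (hx : x * N ∈ Ioo (j : ℝ) (j + 1 / 2)) :
    slopeFn N v x - midInterp N v x = ((j + 1 / 2) * (1 / N) - x) * Dq N v j := by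
  have hceil : ⌈x * N⌉ = j + 1 :=
    Int.ceil_eq_iff.2 ⟨by push_cast; linarith [hx.1], by push_cast; linarith [hx.2]⟩
  have hfloor : ⌊x * N + 1 / 2⌋ = j :=
    Int.floor_eq_iff.2 ⟨by linarith [hx.1], by linarith [hx.2]⟩
  simp only [slopeFn, midInterp, Dq, dq, hceil, hfloor, add_sub_cancel_right]
  field_simp
  ring

theorem slopeFn_sub_midInterp_of_mid_lt (hN : N ≠ 0) (v : ℤ → ℝ)
    (hx : x * N ∈ Ioo ((j : ℝ) + 1 / 2) (j + 1)) :
    slopeFn N v x - midInterp N v x = (x - (j + 1 / 2) * (1 / N)) * -Dq N v (j + 1) := by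
  have hceil : ⌈x * N⌉ = j + 1 :=
    Int.ceil_eq_iff.2 ⟨by push_cast; linarith [hx.1], by push_cast; linarith [hx.2]⟩
  have hfloor : ⌊x * N + 1 / 2⌋ = j + 1 :=
    Int.floor_eq_iff.2 ⟨by push_cast; linarith [hx.1], by push_cast; linarith [hx.2]⟩
  simp only [slopeFn, midInterp, Dq, dq, hceil, hfloor, add_sub_cancel_right]
  push_cast
  field_simp
  ring

end Cell

theorem intervalIntegrable_and_integral_abs_slopeFn_sub_midInterp_rpow_cell {p : ℝ}
    (hp : 0 ≤ p) {N : ℕ} (hN : N ≠ 0) (v : ℤ → ℝ) (j : ℤ) :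
    IntervalIntegrable (fun x => |slopeFn N v x - midInterp N v x| ^ p) volume
        (j * (1 / N)) ((j + 1) * (1 / N)) ∧
      ∫ x in (j : ℝ) * (1 / N)..((j : ℝ) + 1) * (1 / N),
          |slopeFn N v x - midInterp N v x| ^ p =
        (1 / N / 2) ^ (p + 1) / (p + 1) * (|Dq N v j| ^ p + |Dq N v (j + 1)| ^ p) := by
  have hN₀ : (0 : ℝ) < N := by positivity
  have hmid : ((j : ℝ) + 1 / 2) * (1 / N) - j * (1 / N) = 1 / N / 2 := by ring
  have hmid' : ((j : ℝ) + 1) * (1 / N) - (j + 1 / 2) * (1 / N) = 1 / N / 2 := by ring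
  obtain ⟨hint, hval⟩ := intervalIntegrable_and_integral_of_eqOn_abs_sub_rpow_mul hp
    (f := fun x => |slopeFn N v x - midInterp N v x| ^ p) (a := j * (1 / N))
    (m := (j + 1 / 2) * (1 / N)) (b := (j + 1) * (1 / N)) (A := |Dq N v j| ^ p)
    (B := |Dq N v (j + 1)| ^ p) (sub_nonneg.1 (hmid ▸ by positivity))
    (sub_nonneg.1 (hmid' ▸ by positivity))
    (fun x hx => by
      dsimp only
      rw [slopeFn_sub_midInterp_of_lt_mid hN v ((mem_Ioo_mul_one_div_iff hN₀).1 hx), abs_mul,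
        Real.mul_rpow (abs_nonneg _) (abs_nonneg _)])
    (fun x hx => by
      dsimp only
      rw [slopeFn_sub_midInterp_of_mid_lt hN v ((mem_Ioo_mul_one_div_iff hN₀).1 hx), abs_mul,
        abs_neg, Real.mul_rpow (abs_nonneg _) (abs_nonneg _)])
  refine ⟨hint, ?_⟩
  rw [hval, hmid, hmid']
  ring

theorem integral_abs_slopeFn_sub_midInterp_rpow {p : ℝ} (hp : 0 ≤ p) {N : ℕ} (hN : N ≠ 0)
    {v : ℤ → ℝ} (hv : Function.Periodic v N) :
    ∫ x in Ioo (0 : ℝ) 1, |slopeFn N v x - midInterp N v x| ^ p =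
      2 * (1 / N / 2) ^ (p + 1) / (p + 1) * ∑ j ∈ Finset.Icc (1 : ℤ) N, |Dq N v j| ^ p := by
  have hcell (k : ℕ) :=
    intervalIntegrable_and_integral_abs_slopeFn_sub_midInterp_rpow_cell hp hN v k
  push_cast at hcell
  have hsum := intervalIntegral.sum_integral_adjacent_intervals (n := N)
    (a := fun k : ℕ => (k : ℝ) * (1 / N)) fun k _ => by simpa using (hcell k).1
  simp only [Nat.cast_zero, zero_mul, Nat.cast_add_one, hcell] at hsum
  have hper : Function.Periodic (fun j => |Dq N v j| ^ p) N := (Dq_periodic hv).comp (|·| ^ p)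
  rw [mul_one_div_cancel (by positivity), ← Finset.mul_sum, Finset.sum_add_distrib,
    ← hper.sum_range_natCast_add_one,
    Finset.sum_range_natCast_add_one_eq_sum_Icc fun j => |Dq N v j| ^ p] at hsum
  rw [← integral_Ioc_eq_integral_Ioo, ← intervalIntegral.integral_of_le zero_le_one, ← hsum]
  ring

theorem two_mul_half_rpow_add_one_le {x p : ℝ} (hx : 0 ≤ x) (hp : 0 ≤ p) :
    2 * (x / 2) ^ (p + 1) ≤ x ^ (p + 1) := by
  calc 2 * (x / 2) ^ (p + 1) = x ^ (p + 1) / 2 ^ p := by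
        rw [Real.div_rpow hx zero_le_two, Real.rpow_add_one two_ne_zero]
        field_simp
    _ ≤ x ^ (p + 1) := div_le_self (by positivity) (Real.one_le_rpow one_le_two hp)

/-- Lᵖ error of the midpoint-interpolated slope function. -/
theorem stmt19 (p : ℝ) (hp : 1 ≤ p) (N : ℕ) (hN : 1 ≤ N)
    (v : ℤ → ℝ) (hper : ∀ j, v (j + N) = v j) :
    (∫ x in Set.Ioo (0 : ℝ) 1, |slopeFn N v x - midInterp N v x| ^ p) ^ (1 / p) ≤
      (1 + p) ^ (-(1 / p)) * ((1 : ℝ) / N) *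
        (∑ j ∈ Finset.Icc (1 : ℤ) (N : ℤ), |Dq N v j| ^ p * ((1 : ℝ) / N)) ^ (1 / p) := by
  have hp₀ : 0 < p := by linarith
  rw [integral_abs_slopeFn_sub_midInterp_rpow hp₀.le (by omega) hper, ← Finset.sum_mul]
  set h : ℝ := 1 / N
  set S := ∑ j ∈ Finset.Icc (1 : ℤ) N, |Dq N v j| ^ p
  have hh : 0 < h := by positivity
  have hS : 0 ≤ S := Finset.sum_nonneg fun j _ => by positivity
  calc (2 * (h / 2) ^ (p + 1) / (p + 1) * S) ^ (1 / p)
      ≤ (h ^ (p + 1) / (p + 1) * S) ^ (1 / p) := by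
        gcongr
        exact two_mul_half_rpow_add_one_le hh.le hp₀.le
    _ = (1 + p) ^ (-(1 / p)) * h * (S * h) ^ (1 / p) := by
        have hsplit : h ^ p * h / (p + 1) * S = h ^ p * ((1 + p)⁻¹ * (S * h)) := by ring
        rw [Real.rpow_add_one hh.ne', hsplit, Real.mul_rpow (by positivity) (by positivity),
          Real.mul_rpow (by positivity) (by positivity), one_div,
          Real.rpow_rpow_inv hh.le hp₀.ne', Real.inv_rpow (by positivity),
          Real.rpow_neg (by positivity)]
        ring

end
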